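/- The swapping algorithm for symmetric binary valuations is not Pareto optimal: in the instance with agents a,b,c,d, rooms i,j, all valuations 0 except h_b(c)=h_c(b)=1, the assignment {(a,b,i),(c,d,j)} has no 2PS blocking pair (so the algorithm outputs it), yet it is Pareto dominated by {(b,c,i),(a,d,j)}. -/
import Mathlib


/-- A roommate assignment: each agent has a roommate (`mate`) and a room (`room`);
roommates share a room and each room hosts exactly one pair. -/
structure Assignment (A R : Type*) where
  mate : A → A
  room : A → R
  mate_ne_self : ∀ i, mate i ≠ i
  mate_invol : ∀ i, mate (mate i) = i
  room_mate : ∀ i, room (mate i) = room i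
  room_eq_iff : ∀ i j, room i = room j ↔ (j = i ∨ j = mate i)

variable {A R : Type*}

/-- Utility of agent `i` in assignment `μ`: happiness for the roommate plus value of the room. -/
def util (h : A → A → ℝ) (v : A → R → ℝ) (μ : Assignment A R) (i : A) : ℝ :=
  h i (μ.mate i) + v i (μ.room i)

/-- `(i,j)` is a 2-person-stable blocking pair: they live in different rooms and both would
strictly gain by swapping places. -/
def blocking2PS (h : A → A → ℝ) (v : A → R → ℝ) (μ : Assignment A R) (i j : A) : Prop :=
  μ.room i ≠ μ.room j ∧
  h i (μ.mate j) + v i (μ.room j) > h i (μ.mate i) + v i (μ.room i) ∧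
  h j (μ.mate i) + v j (μ.room i) > h j (μ.mate j) + v j (μ.room j)

/-- `(i,j)` is a 4-person-stable blocking pair: in addition, both displaced roommates
strictly prefer their new roommate. -/
def blocking4PS (h : A → A → ℝ) (v : A → R → ℝ) (μ : Assignment A R) (i j : A) : Prop :=
  blocking2PS h v μ i j ∧
  h (μ.mate i) j > h (μ.mate i) i ∧
  h (μ.mate j) i > h (μ.mate j) j

def is2PS (h : A → A → ℝ) (v : A → R → ℝ) (μ : Assignment A R) : Prop :=
  ∀ i j, ¬ blocking2PS h v μ i j

def is4PS (h : A → A → ℝ) (v : A → R → ℝ) (μ : Assignment A R) : Prop :=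
  ∀ i j, ¬ blocking4PS h v μ i j

/-- `μ'` Pareto dominates `μ`. -/
def ParetoDom (h : A → A → ℝ) (v : A → R → ℝ) (μ' μ : Assignment A R) : Prop :=
  (∀ i, util h v μ i ≤ util h v μ' i) ∧ ∃ i, util h v μ i < util h v μ' i

def ParetoOpt (h : A → A → ℝ) (v : A → R → ℝ) (μ : Assignment A R) : Prop :=
  ∀ μ', ¬ ParetoDom h v μ' μ

/-- `μ'` is the result of swapping agents `i` and `j` in `μ`. -/
def IsSwap (μ μ' : Assignment A R) (i j : A) : Prop :=
  μ'.mate i = μ.mate j ∧ μ'.room i = μ.room j ∧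
  μ'.mate j = μ.mate i ∧ μ'.room j = μ.room i ∧
  μ'.room (μ.mate i) = μ.room i ∧ μ'.room (μ.mate j) = μ.room j ∧
  ∀ k, k ≠ i → k ≠ j → k ≠ μ.mate i → k ≠ μ.mate j →
    μ'.mate k = μ.mate k ∧ μ'.room k = μ.room k

/-- Social welfare: the sum of all agents' utilities. -/
noncomputable def SW [Fintype A] (h : A → A → ℝ) (v : A → R → ℝ) (μ : Assignment A R) : ℝ :=
  ∑ i, util h v μ i

/-- Symmetric binary happiness: only b and c (= 1 and 2) value each other, at 1. -/
def hEx19 : Fin 4 → Fin 4 → ℝ := fun i j =>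
  if (i = 1 ∧ j = 2) ∨ (i = 2 ∧ j = 1) then 1 else 0

/-- All room values are 0. -/
def vEx19 : Fin 4 → Fin 2 → ℝ := fun _ _ => 0

/-- μ = {(a,b,i),(c,d,j)}. -/
def μ19 : Assignment (Fin 4) (Fin 2) :=
  ⟨![1,0,3,2], ![0,0,1,1], by decide, by decide, by decide, by decide⟩

/-- μ' = {(b,c,i),(a,d,j)}. -/
def μ19' : Assignment (Fin 4) (Fin 2) :=
  ⟨![3,2,1,0], ![1,0,0,1], by decide, by decide, by decide, by decide⟩

/-- The swapping algorithm for symmetric binary valuations is not Pareto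
optimal: μ has no 2PS blocking pair (so the algorithm outputs it), yet μ is Pareto
dominated by μ'. -/
theorem swapping_not_paretoOpt :
    is2PS hEx19 vEx19 μ19 ∧ ParetoDom hEx19 vEx19 μ19' μ19 ∧
    ¬ ParetoOpt hEx19 vEx19 μ19 := by
  have h1 : is2PS hEx19 vEx19 μ19 := by
    intro i j hb
    obtain ⟨hne, h1, h2⟩ := hb
    fin_cases i <;> fin_cases j <;>
      simp_all [hEx19, vEx19, μ19, Matrix.cons_val_zero, Matrix.cons_val_one]
  have h2 : ParetoDom hEx19 vEx19 μ19' μ19 := by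
    constructor
    · intro i
      fin_cases i <;> norm_num [util, hEx19, vEx19, μ19, μ19', Fin.ext_iff] <;> split_ifs <;> norm_num
    · exact ⟨1, by norm_num [util, hEx19, vEx19, μ19, μ19', Fin.ext_iff]⟩
  exact ⟨h1, h2, fun hp => hp μ19' h2⟩
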